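/- If G is the disjoint union of graphs G_1 and G_2, then the center of A_G is 1-dimensional if and only if the centers of A_{G_1} and A_{G_2} are both 1-dimensional. -/

import Mathlib

set_option synthInstance.maxHeartbeats 1000000
set_option maxHeartbeats 1000000


open FreeAlgebra

inductive CliffordRel {V : Type} (G : SimpleGraph V) :
    FreeAlgebra ℂ V → FreeAlgebra ℂ V → Prop
  | sq (i : V) : CliffordRel G (ι ℂ i * ι ℂ i) (-1)
  | anticomm {i j : V} (h : G.Adj i j) :
      CliffordRel G (ι ℂ i * ι ℂ j) (-(ι ℂ j * ι ℂ i))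
  | comm {i j : V} (hne : i ≠ j) (h : ¬ G.Adj i j) :
      CliffordRel G (ι ℂ i * ι ℂ j) (ι ℂ j * ι ℂ i)

/-- The Clifford graph algebra of a simple graph. -/
abbrev GraphCliffordAlgebra {V : Type} (G : SimpleGraph V) :=
  RingQuot (CliffordRel G)

/-- The generator of the Clifford graph algebra corresponding to a vertex. -/
noncomputable def gen {V : Type} (G : SimpleGraph V) (i : V) :
    GraphCliffordAlgebra G :=
  RingQuot.mkAlgHom ℂ (CliffordRel G) (ι ℂ i)

/-- The monomial `e_α` : the ordered product of the generators in `α`. -/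
noncomputable def mono {n : ℕ} (G : SimpleGraph (Fin n)) (α : Finset (Fin n)) :
    GraphCliffordAlgebra G :=
  ((Finset.sort α (· ≤ ·)).map (gen G)).prod


/-- The disjoint union of two simple graphs on disjoint vertex sets. -/
def disjUnionGraph {V₁ V₂ : Type} [Fintype V₁] [Fintype V₂] (G₁ : SimpleGraph V₁) (G₂ : SimpleGraph V₂) :
    SimpleGraph (V₁ ⊕ V₂) where
  Adj x y :=
    match x, y with
    | .inl a, .inl b => G₁.Adj a b
    | .inr a, .inr b => G₂.Adj a b
    | _, _ => False
  symm := ⟨by rintro (a | a) (b | b) h <;> simp_all <;> exact h.symm⟩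
  loopless := ⟨by rintro (a | a) h <;> simp_all⟩



open Module TensorProduct

section General

variable {K : Type*} [Field K] {A B : Type*} [Ring A] [Algebra K A] [Ring B] [Algebra K B]

lemma exists_one_functional [Nontrivial A] : ∃ g : A →ₗ[K] K, g 1 = 1 := by
  obtain ⟨g, hg⟩ := (LinearMap.toSpanSingleton K A 1).exists_leftInverse_of_injective
    (LinearMap.ker_eq_bot.mpr (smul_left_injective K one_ne_zero))
  refine ⟨g, ?_⟩
  have := congrArg (fun f : K →ₗ[K] K => f 1) hg
  simpa using this

lemma tmul_one_injective [Nontrivial B] :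
    Function.Injective (fun a : A => a ⊗ₜ[K] (1 : B)) := by
  obtain ⟨g, hg⟩ := exists_one_functional (K := K) (A := B)
  intro a a' h
  have := congrArg ((TensorProduct.rid K A).toLinearMap.comp (LinearMap.lTensor A g)) h
  simpa [hg] using this

lemma one_tmul_injective [Nontrivial A] :
    Function.Injective (fun b : B => (1 : A) ⊗ₜ[K] b) := by
  obtain ⟨g, hg⟩ := exists_one_functional (K := K) (A := A)
  intro b b' h
  have := congrArg ((TensorProduct.lid K B).toLinearMap.comp (LinearMap.rTensor B g)) h
  simpa [hg] using this

lemma nontrivial_tensor [Nontrivial A] [Nontrivial B] : Nontrivial (A ⊗[K] B) := by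
  refine nontrivial_of_ne (1 : A ⊗[K] B) 0 ?_
  intro h
  have := tmul_one_injective (K := K) (A := A) (B := B)
    (by simpa [Algebra.TensorProduct.one_def] using h : (1:A) ⊗ₜ[K] (1:B) = (0:A) ⊗ₜ[K] 1)
  exact one_ne_zero this

end General

section WithBasis

variable {K : Type*} [Field K] {A B : Type*} [Ring A] [Algebra K A] [Ring B] [Algebra K B]
variable {ι : Type*} (b : Basis ι K B)

/-- coefficient functional -/
noncomputable def coeffMap (j : ι) : A ⊗[K] B →ₗ[K] A :=
  (TensorProduct.rid K A).toLinearMap.comp (LinearMap.lTensor A (b.coord j))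

lemma coeffMap_tmul (j : ι) (a : A) (y : B) : coeffMap b j (a ⊗ₜ y) = b.coord j y • a := by
  simp [coeffMap]

lemma exists_repr (z : A ⊗[K] B) :
    ∃ (s : Finset ι) (f : ι → A), z = ∑ i ∈ s, f i ⊗ₜ[K] b i := by
  classical
  induction z with
  | zero => exact ⟨∅, fun _ => 0, by simp⟩
  | tmul a y =>
      refine ⟨(b.repr y).support, fun i => (b.repr y) i • a, ?_⟩
      conv_lhs => rw [← b.linearCombination_repr y]
      rw [Finsupp.linearCombination_apply, Finsupp.sum, tmul_sum]
      exact Finset.sum_congr rfl fun i _ => by rw [smul_tmul]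
  | add z₁ z₂ h₁ h₂ =>
      obtain ⟨s₁, f₁, rfl⟩ := h₁
      obtain ⟨s₂, f₂, rfl⟩ := h₂
      refine ⟨s₁ ∪ s₂, (fun i => (if i ∈ s₁ then f₁ i else 0) + (if i ∈ s₂ then f₂ i else 0)), ?_⟩
      have e1 : ∑ i ∈ s₁, f₁ i ⊗ₜ[K] b i
          = ∑ i ∈ s₁ ∪ s₂, (if i ∈ s₁ then f₁ i else 0) ⊗ₜ[K] b i := by
        rw [Finset.sum_congr rfl (fun i _ => by split <;> simp :
          ∀ i ∈ s₁ ∪ s₂, (if i ∈ s₁ then f₁ i else 0) ⊗ₜ[K] b i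
            = if i ∈ s₁ then f₁ i ⊗ₜ[K] b i else 0),
          Finset.sum_ite_mem, Finset.union_inter_cancel_left]
      have e2 : ∑ i ∈ s₂, f₂ i ⊗ₜ[K] b i
          = ∑ i ∈ s₁ ∪ s₂, (if i ∈ s₂ then f₂ i else 0) ⊗ₜ[K] b i := by
        rw [Finset.sum_congr rfl (fun i _ => by split <;> simp :
          ∀ i ∈ s₁ ∪ s₂, (if i ∈ s₂ then f₂ i else 0) ⊗ₜ[K] b i
            = if i ∈ s₂ then f₂ i ⊗ₜ[K] b i else 0),
          Finset.sum_ite_mem, Finset.union_inter_cancel_right]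
      rw [e1, e2, ← Finset.sum_add_distrib]
      exact Finset.sum_congr rfl fun i _ => by rw [add_tmul]

open scoped Classical in
lemma coeffMap_sum (s : Finset ι) (f : ι → A) (j : ι) :
    coeffMap b j (∑ i ∈ s, f i ⊗ₜ[K] b i) = if j ∈ s then f j else 0 := by
  rw [map_sum]
  rw [Finset.sum_congr rfl (fun i _ => by
    rw [coeffMap_tmul, Basis.coord_apply, Basis.repr_self, Finsupp.single_apply]
    split <;> simp_all : ∀ i ∈ s, coeffMap b j (f i ⊗ₜ[K] b i)
      = if i = j then f i else 0)]
  rw [Finset.sum_ite_eq' s j f]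

end WithBasis

section Center

variable {K : Type*} [Field K] {A B : Type*} [Ring A] [Algebra K A] [Ring B] [Algebra K B]

lemma one_tmul_algebraMap (c : K) :
    (1 : A) ⊗ₜ[K] algebraMap K B c = algebraMap K (A ⊗[K] B) c := by
  rw [← Algebra.TensorProduct.includeRight_apply]
  exact AlgHom.commutes _ c

lemma algebraMap_tmul_one (c : K) :
    (algebraMap K A c) ⊗ₜ[K] (1 : B) = algebraMap K (A ⊗[K] B) c := by
  rw [← Algebra.TensorProduct.includeLeft_apply (S := K)]
  exact AlgHom.commutes _ c

theorem center_tensor_eq_bot [Nontrivial A]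
    (hA : Subalgebra.center K A = ⊥) (hB : Subalgebra.center K B = ⊥) :
    Subalgebra.center K (A ⊗[K] B) = ⊥ := by
  classical
  refine le_antisymm ?_ bot_le
  intro z hz
  obtain ⟨s, f, rfl⟩ := exists_repr (Basis.ofVectorSpace K B) z
  set b := Basis.ofVectorSpace K B with hb
  -- each coefficient is central
  have hf : ∀ j ∈ s, f j ∈ Subalgebra.center K A := by
    intro j hj
    rw [Subalgebra.mem_center_iff]
    intro a
    have hc := (Subalgebra.mem_center_iff.mp hz) (a ⊗ₜ[K] (1 : B))
    have h1 : (a ⊗ₜ[K] (1 : B)) * ∑ i ∈ s, f i ⊗ₜ[K] b i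
        = ∑ i ∈ s, (a * f i) ⊗ₜ[K] b i := by
      rw [Finset.mul_sum]
      exact Finset.sum_congr rfl fun i _ => by
        simp [Algebra.TensorProduct.tmul_mul_tmul]
    have h2 : (∑ i ∈ s, f i ⊗ₜ[K] b i) * (a ⊗ₜ[K] (1 : B))
        = ∑ i ∈ s, (f i * a) ⊗ₜ[K] b i := by
      rw [Finset.sum_mul]
      exact Finset.sum_congr rfl fun i _ => by
        simp [Algebra.TensorProduct.tmul_mul_tmul]
    have hc' : ∑ i ∈ s, (a * f i) ⊗ₜ[K] b i = ∑ i ∈ s, (f i * a) ⊗ₜ[K] b i := by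
      rw [← h1, ← h2]; exact hc
    have := congrArg (coeffMap b j) hc'
    rw [coeffMap_sum, coeffMap_sum, if_pos hj, if_pos hj] at this
    exact this
  -- rewrite z as 1 ⊗ w
  have hfc : ∀ j, ∃ c : K, (if j ∈ s then f j else 0) = algebraMap K A c := by
    intro j
    by_cases hj : j ∈ s
    · have := hf j hj; rw [hA, Algebra.mem_bot] at this
      obtain ⟨c, hc⟩ := this
      exact ⟨c, by rw [if_pos hj, ← hc]⟩
    · exact ⟨0, by rw [if_neg hj, map_zero]⟩
  choose c hcf using hfc
  have hz1 : ∑ i ∈ s, f i ⊗ₜ[K] b i = (1 : A) ⊗ₜ[K] (∑ i ∈ s, c i • b i) := by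
    rw [tmul_sum]
    refine Finset.sum_congr rfl fun i hi => ?_
    have hfi : f i = algebraMap K A (c i) := by
      have := hcf i; rwa [if_pos hi] at this
    rw [hfi, Algebra.algebraMap_eq_smul_one, smul_tmul]
  set w := ∑ i ∈ s, c i • b i with hw
  -- the right factor is central in B
  have hwB : w ∈ Subalgebra.center K B := by
    rw [Subalgebra.mem_center_iff]
    intro y
    have hc := (Subalgebra.mem_center_iff.mp hz) ((1 : A) ⊗ₜ[K] y)
    rw [hz1, Algebra.TensorProduct.tmul_mul_tmul, Algebra.TensorProduct.tmul_mul_tmul,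
      one_mul] at hc
    exact one_tmul_injective hc
  rw [hB, Algebra.mem_bot] at hwB
  obtain ⟨c₀, hc₀⟩ := hwB
  rw [Algebra.mem_bot]
  exact ⟨c₀, by rw [hz1, ← hc₀, one_tmul_algebraMap]⟩

theorem center_left_eq_bot [Nontrivial B]
    (h : Subalgebra.center K (A ⊗[K] B) = ⊥) : Subalgebra.center K A = ⊥ := by
  refine le_antisymm ?_ bot_le
  intro x hx
  have hmem : x ⊗ₜ[K] (1 : B) ∈ Subalgebra.center K (A ⊗[K] B) := by
    rw [Subalgebra.mem_center_iff]
    intro w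
    induction w with
    | zero => simp
    | tmul a y =>
        rw [Algebra.TensorProduct.tmul_mul_tmul, Algebra.TensorProduct.tmul_mul_tmul,
          mul_one, one_mul, Subalgebra.mem_center_iff.mp hx a]
    | add w₁ w₂ h₁ h₂ => rw [add_mul, mul_add, h₁, h₂]
  rw [h, Algebra.mem_bot] at hmem
  obtain ⟨c, hc⟩ := hmem
  rw [← algebraMap_tmul_one] at hc
  exact Algebra.mem_bot.mpr ⟨c, tmul_one_injective hc⟩

theorem center_right_eq_bot [Nontrivial A]
    (h : Subalgebra.center K (A ⊗[K] B) = ⊥) : Subalgebra.center K B = ⊥ := by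
  refine le_antisymm ?_ bot_le
  intro x hx
  have hmem : (1 : A) ⊗ₜ[K] x ∈ Subalgebra.center K (A ⊗[K] B) := by
    rw [Subalgebra.mem_center_iff]
    intro w
    induction w with
    | zero => simp
    | tmul a y =>
        rw [Algebra.TensorProduct.tmul_mul_tmul, Algebra.TensorProduct.tmul_mul_tmul,
          mul_one, one_mul, Subalgebra.mem_center_iff.mp hx y]
    | add w₁ w₂ h₁ h₂ => rw [add_mul, mul_add, h₁, h₂]
  rw [h, Algebra.mem_bot] at hmem
  obtain ⟨c, hc⟩ := hmem
  rw [← one_tmul_algebraMap] at hc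
  exact Algebra.mem_bot.mpr ⟨c, one_tmul_injective hc⟩

theorem finrank_center_eq_one_iff :
    Module.finrank K (Subalgebra.center K A) = 1 ↔
      Nontrivial A ∧ Subalgebra.center K A = ⊥ := by
  constructor
  · intro h
    haveI : FiniteDimensional K (Subalgebra.center K A) :=
      FiniteDimensional.of_finrank_eq_succ h
    have hnt : Nontrivial (Subalgebra.center K A) :=
      Module.nontrivial_of_finrank_pos (R := K) (by omega)
    have hA : Nontrivial A := by
      obtain ⟨x, y, hxy⟩ := hnt
      exact ⟨x, y, fun e => hxy (Subtype.ext e)⟩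
    refine ⟨hA, ?_⟩
    exact (Subalgebra.eq_of_le_of_finrank_le bot_le
      (by rw [h, Subalgebra.finrank_bot])).symm
  · rintro ⟨hA, h⟩
    rw [h]
    exact Subalgebra.finrank_bot

theorem finrank_center_tensor_one_iff :
    Module.finrank K (Subalgebra.center K (A ⊗[K] B)) = 1 ↔
      Module.finrank K (Subalgebra.center K A) = 1 ∧
      Module.finrank K (Subalgebra.center K B) = 1 := by
  rw [finrank_center_eq_one_iff, finrank_center_eq_one_iff, finrank_center_eq_one_iff]
  constructor
  · rintro ⟨hnt, hc⟩
    have hA : Nontrivial A := by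
      by_contra hcon
      rw [not_nontrivial_iff_subsingleton] at hcon
      refine (not_nontrivial_iff_subsingleton.mpr ?_) hnt
      constructor
      intro u v
      have h10 : (1 : A) = 0 := Subsingleton.elim _ _
      have hz : ∀ t : A ⊗[K] B, t = 0 := fun t => by
        calc t = 1 * t := (one_mul t).symm
        _ = 0 * t := by rw [Algebra.TensorProduct.one_def, h10, zero_tmul]
        _ = 0 := zero_mul t
      rw [hz u, hz v]
    have hB : Nontrivial B := by
      by_contra hcon
      rw [not_nontrivial_iff_subsingleton] at hcon
      refine (not_nontrivial_iff_subsingleton.mpr ?_) hnt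
      constructor
      intro u v
      have h10 : (1 : B) = 0 := Subsingleton.elim _ _
      have hz : ∀ t : A ⊗[K] B, t = 0 := fun t => by
        calc t = 1 * t := (one_mul t).symm
        _ = 0 * t := by rw [Algebra.TensorProduct.one_def, h10, tmul_zero]
        _ = 0 := zero_mul t
      rw [hz u, hz v]
    exact ⟨⟨hA, center_left_eq_bot hc⟩, ⟨hB, center_right_eq_bot hc⟩⟩
  · rintro ⟨⟨hA, h1⟩, ⟨hB, h2⟩⟩
    haveI := hA
    haveI := hB
    exact ⟨nontrivial_tensor, center_tensor_eq_bot h1 h2⟩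

end Center


section GenLemmas

open TensorProduct

variable {V : Type} (G : SimpleGraph V)

lemma gen_sq (i : V) : gen G i * gen G i = -1 := by
  have h := RingQuot.mkAlgHom_rel ℂ (CliffordRel.sq (G := G) i)
  simpa only [gen, map_mul, map_neg, map_one] using h

lemma gen_anticomm {i j : V} (h : G.Adj i j) :
    gen G i * gen G j = -(gen G j * gen G i) := by
  have h' := RingQuot.mkAlgHom_rel ℂ (CliffordRel.anticomm h)
  simpa only [gen, map_mul, map_neg] using h'

lemma gen_comm {i j : V} (hne : i ≠ j) (h : ¬ G.Adj i j) :
    gen G i * gen G j = gen G j * gen G i := by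
  have h' := RingQuot.mkAlgHom_rel ℂ (CliffordRel.comm hne h)
  simpa only [gen, map_mul] using h'

end GenLemmas

section Union

open TensorProduct

variable {V₁ V₂ : Type} [Fintype V₁] [Fintype V₂] (G₁ : SimpleGraph V₁) (G₂ : SimpleGraph V₂)

lemma dU_adj_inl_inl {a b : V₁} : (disjUnionGraph G₁ G₂).Adj (.inl a) (.inl b) ↔ G₁.Adj a b :=
  Iff.rfl

lemma dU_adj_inr_inr {a b : V₂} : (disjUnionGraph G₁ G₂).Adj (.inr a) (.inr b) ↔ G₂.Adj a b :=
  Iff.rfl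

lemma dU_not_adj_inl_inr {a : V₁} {b : V₂} : ¬ (disjUnionGraph G₁ G₂).Adj (.inl a) (.inr b) :=
  fun h => h

lemma dU_not_adj_inr_inl {a : V₂} {b : V₁} : ¬ (disjUnionGraph G₁ G₂).Adj (.inr a) (.inl b) :=
  fun h => h

/-- embedding of the first factor -/
noncomputable def emb₁ :
    GraphCliffordAlgebra G₁ →ₐ[ℂ] GraphCliffordAlgebra (disjUnionGraph G₁ G₂) :=
  RingQuot.liftAlgHom ℂ ⟨FreeAlgebra.lift ℂ (fun i => gen (disjUnionGraph G₁ G₂) (.inl i)),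
    by
      intro x y h
      induction h with
      | sq i =>
          simp only [map_mul, lift_ι_apply, map_neg, map_one]
          exact gen_sq _ _
      | @anticomm i j h =>
          simp only [map_mul, lift_ι_apply, map_neg]
          exact gen_anticomm _ h
      | @comm i j hne h =>
          simp only [map_mul, lift_ι_apply]
          exact gen_comm _ (fun he => hne (Sum.inl_injective he)) h⟩

/-- embedding of the second factor -/
noncomputable def emb₂ :
    GraphCliffordAlgebra G₂ →ₐ[ℂ] GraphCliffordAlgebra (disjUnionGraph G₁ G₂) :=
  RingQuot.liftAlgHom ℂ ⟨FreeAlgebra.lift ℂ (fun i => gen (disjUnionGraph G₁ G₂) (.inr i)),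
    by
      intro x y h
      induction h with
      | sq i =>
          simp only [map_mul, lift_ι_apply, map_neg, map_one]
          exact gen_sq _ _
      | @anticomm i j h =>
          simp only [map_mul, lift_ι_apply, map_neg]
          exact gen_anticomm _ h
      | @comm i j hne h =>
          simp only [map_mul, lift_ι_apply]
          exact gen_comm _ (fun he => hne (Sum.inr_injective he)) h⟩

@[simp] lemma emb₁_gen (i : V₁) :
    emb₁ G₁ G₂ (gen G₁ i) = gen (disjUnionGraph G₁ G₂) (.inl i) := by
  simp only [emb₁, gen, RingQuot.liftAlgHom_mkAlgHom_apply, lift_ι_apply]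

@[simp] lemma emb₂_gen (i : V₂) :
    emb₂ G₁ G₂ (gen G₂ i) = gen (disjUnionGraph G₁ G₂) (.inr i) := by
  simp only [emb₂, gen, RingQuot.liftAlgHom_mkAlgHom_apply, lift_ι_apply]

/-- map to the tensor product -/
noncomputable def unionToTensor :
    GraphCliffordAlgebra (disjUnionGraph G₁ G₂) →ₐ[ℂ]
      (GraphCliffordAlgebra G₁ ⊗[ℂ] GraphCliffordAlgebra G₂) :=
  RingQuot.liftAlgHom ℂ ⟨FreeAlgebra.lift ℂ
      (Sum.elim (fun i => gen G₁ i ⊗ₜ[ℂ] 1) (fun j => (1 : GraphCliffordAlgebra G₁) ⊗ₜ[ℂ] gen G₂ j)),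
    by
      intro x y h
      induction h with
      | sq i =>
          obtain i | i := i <;>
          · simp only [map_mul, lift_ι_apply, map_neg, map_one, Sum.elim_inl, Sum.elim_inr,
              Algebra.TensorProduct.tmul_mul_tmul, one_mul, mul_one, gen_sq,
              Algebra.TensorProduct.one_def]
            simp [neg_tmul, tmul_neg]
      | @anticomm i j h =>
          obtain i | i := i <;> obtain j | j := j
          · simp only [map_mul, lift_ι_apply, map_neg, Sum.elim_inl,
              Algebra.TensorProduct.tmul_mul_tmul, one_mul]
            rw [gen_anticomm G₁ ((dU_adj_inl_inl G₁ G₂).mp h), neg_tmul]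
          · exact absurd h (dU_not_adj_inl_inr G₁ G₂)
          · exact absurd h (dU_not_adj_inr_inl G₁ G₂)
          · simp only [map_mul, lift_ι_apply, map_neg, Sum.elim_inr,
              Algebra.TensorProduct.tmul_mul_tmul, one_mul]
            rw [gen_anticomm G₂ ((dU_adj_inr_inr G₁ G₂).mp h), tmul_neg]
      | @comm i j hne h =>
          obtain i | i := i <;> obtain j | j := j
          · simp only [map_mul, lift_ι_apply, Sum.elim_inl,
              Algebra.TensorProduct.tmul_mul_tmul, one_mul]
            rw [gen_comm G₁ (fun he => hne (congrArg Sum.inl he))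
              (fun hadj => h ((dU_adj_inl_inl G₁ G₂).mpr hadj))]
          · simp only [map_mul, lift_ι_apply, Sum.elim_inl, Sum.elim_inr,
              Algebra.TensorProduct.tmul_mul_tmul, one_mul, mul_one]
          · simp only [map_mul, lift_ι_apply, Sum.elim_inl, Sum.elim_inr,
              Algebra.TensorProduct.tmul_mul_tmul, one_mul, mul_one]
          · simp only [map_mul, lift_ι_apply, Sum.elim_inr,
              Algebra.TensorProduct.tmul_mul_tmul, mul_one]
            rw [gen_comm G₂ (fun he => hne (congrArg Sum.inr he))
              (fun hadj => h ((dU_adj_inr_inr G₁ G₂).mpr hadj))]⟩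

@[simp] lemma unionToTensor_gen_inl (i : V₁) :
    unionToTensor G₁ G₂ (gen (disjUnionGraph G₁ G₂) (.inl i)) = gen G₁ i ⊗ₜ[ℂ] 1 := by
  simp only [unionToTensor, gen, RingQuot.liftAlgHom_mkAlgHom_apply, lift_ι_apply, Sum.elim_inl]

@[simp] lemma unionToTensor_gen_inr (i : V₂) :
    unionToTensor G₁ G₂ (gen (disjUnionGraph G₁ G₂) (.inr i)) = (1 : GraphCliffordAlgebra G₁) ⊗ₜ[ℂ] gen G₂ i := by
  simp only [unionToTensor, gen, RingQuot.liftAlgHom_mkAlgHom_apply, lift_ι_apply, Sum.elim_inr]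

lemma gen_inl_commute_emb₂ (i : V₁) (y : GraphCliffordAlgebra G₂) :
    Commute (gen (disjUnionGraph G₁ G₂) (.inl i)) (emb₂ G₁ G₂ y) := by
  obtain ⟨y, rfl⟩ := RingQuot.mkAlgHom_surjective ℂ (CliffordRel G₂) y
  induction y using FreeAlgebra.induction with
  | grade1 j =>
      rw [show (RingQuot.mkAlgHom ℂ (CliffordRel G₂)) (ι ℂ j) = gen G₂ j from rfl, emb₂_gen]
      exact gen_comm (disjUnionGraph G₁ G₂) (by simp) (dU_not_adj_inl_inr G₁ G₂)
  | grade0 r =>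
      rw [AlgHom.commutes, AlgHom.commutes]
      exact Algebra.commute_algebraMap_right r _
  | add a b ha hb => rw [map_add, map_add]; exact ha.add_right hb
  | mul a b ha hb => rw [map_mul, map_mul]; exact ha.mul_right hb

lemma emb_commute (x : GraphCliffordAlgebra G₁) (y : GraphCliffordAlgebra G₂) :
    Commute (emb₁ G₁ G₂ x) (emb₂ G₁ G₂ y) := by
  obtain ⟨x, rfl⟩ := RingQuot.mkAlgHom_surjective ℂ (CliffordRel G₁) x
  induction x using FreeAlgebra.induction with
  | grade1 i =>
      rw [show (RingQuot.mkAlgHom ℂ (CliffordRel G₁)) (ι ℂ i) = gen G₁ i from rfl, emb₁_gen]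
      exact gen_inl_commute_emb₂ G₁ G₂ i y
  | grade0 r =>
      rw [AlgHom.commutes, AlgHom.commutes]
      exact Algebra.commute_algebraMap_left r _
  | add a b ha hb => rw [map_add, map_add]; exact ha.add_left hb
  | mul a b ha hb => rw [map_mul, map_mul]; exact ha.mul_left hb

/-- map from the tensor product -/
noncomputable def fromTensor :
    (GraphCliffordAlgebra G₁ ⊗[ℂ] GraphCliffordAlgebra G₂) →ₐ[ℂ]
      GraphCliffordAlgebra (disjUnionGraph G₁ G₂) :=
  Algebra.TensorProduct.lift (emb₁ G₁ G₂) (emb₂ G₁ G₂) (emb_commute G₁ G₂)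

lemma unionToTensor_comp_emb₁ :
    (unionToTensor G₁ G₂).comp (emb₁ G₁ G₂) =
      (Algebra.TensorProduct.includeLeft :
        GraphCliffordAlgebra G₁ →ₐ[ℂ] GraphCliffordAlgebra G₁ ⊗[ℂ] GraphCliffordAlgebra G₂) := by
  refine RingQuot.ringQuot_ext' ℂ _ _ (FreeAlgebra.hom_ext (funext fun i => ?_))
  show (unionToTensor G₁ G₂) (emb₁ G₁ G₂ ((RingQuot.mkAlgHom ℂ (CliffordRel G₁)) (ι ℂ i))) = _
  rw [show (RingQuot.mkAlgHom ℂ (CliffordRel G₁)) (ι ℂ i) = gen G₁ i from rfl, emb₁_gen,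
    unionToTensor_gen_inl]
  rfl

lemma unionToTensor_comp_emb₂ :
    (unionToTensor G₁ G₂).comp (emb₂ G₁ G₂) =
      (Algebra.TensorProduct.includeRight :
        GraphCliffordAlgebra G₂ →ₐ[ℂ] GraphCliffordAlgebra G₁ ⊗[ℂ] GraphCliffordAlgebra G₂) := by
  refine RingQuot.ringQuot_ext' ℂ _ _ (FreeAlgebra.hom_ext (funext fun i => ?_))
  show (unionToTensor G₁ G₂) (emb₂ G₁ G₂ ((RingQuot.mkAlgHom ℂ (CliffordRel G₂)) (ι ℂ i))) = _
  rw [show (RingQuot.mkAlgHom ℂ (CliffordRel G₂)) (ι ℂ i) = gen G₂ i from rfl, emb₂_gen,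
    unionToTensor_gen_inr]
  rfl

/-- the Clifford algebra of a disjoint union is the tensor product -/
noncomputable def unionEquivTensor :
    GraphCliffordAlgebra (disjUnionGraph G₁ G₂) ≃ₐ[ℂ]
      (GraphCliffordAlgebra G₁ ⊗[ℂ] GraphCliffordAlgebra G₂) := by
  refine AlgEquiv.ofAlgHom (unionToTensor G₁ G₂) (fromTensor G₁ G₂)
    (Algebra.TensorProduct.ext' (S := ℂ) fun a b => ?_) ?_
  · show (unionToTensor G₁ G₂) ((fromTensor G₁ G₂) (a ⊗ₜ[ℂ] b)) = a ⊗ₜ[ℂ] b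
    rw [fromTensor, Algebra.TensorProduct.lift_tmul, map_mul]
    have h1 := AlgHom.congr_fun (unionToTensor_comp_emb₁ G₁ G₂) a
    have h2 := AlgHom.congr_fun (unionToTensor_comp_emb₂ G₁ G₂) b
    simp only [AlgHom.coe_comp, Function.comp_apply] at h1 h2
    rw [h1, h2, Algebra.TensorProduct.includeLeft_apply,
      Algebra.TensorProduct.includeRight_apply, Algebra.TensorProduct.tmul_mul_tmul,
      one_mul, mul_one]
  · refine RingQuot.ringQuot_ext' ℂ _ _ (FreeAlgebra.hom_ext (funext fun v => ?_))
    show (fromTensor G₁ G₂) ((unionToTensor G₁ G₂)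
      ((RingQuot.mkAlgHom ℂ (CliffordRel (disjUnionGraph G₁ G₂))) (ι ℂ v))) = _
    rw [show (RingQuot.mkAlgHom ℂ (CliffordRel (disjUnionGraph G₁ G₂))) (ι ℂ v)
      = gen (disjUnionGraph G₁ G₂) v from rfl]
    obtain i | i := v
    · rw [unionToTensor_gen_inl, fromTensor, Algebra.TensorProduct.lift_tmul, map_one,
        mul_one, emb₁_gen]
      rfl
    · rw [unionToTensor_gen_inr, fromTensor, Algebra.TensorProduct.lift_tmul, map_one,
        one_mul, emb₂_gen]
      rfl

end Union

section CenterCongr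

variable {K : Type*} [CommSemiring K] {A B : Type*} [Semiring A] [Algebra K A]
  [Semiring B] [Algebra K B]

/-- an algebra equivalence restricts to a linear equivalence of centers -/
noncomputable def centerLinearCongr (e : A ≃ₐ[K] B) :
    Subalgebra.center K A ≃ₗ[K] Subalgebra.center K B where
  toFun z := ⟨e z, by
    rw [Subalgebra.mem_center_iff]
    intro w
    have := Subalgebra.mem_center_iff.mp z.2 (e.symm w)
    calc w * e z = e (e.symm w * z) := by rw [map_mul, e.apply_symm_apply]
    _ = e (z * e.symm w) := by rw [this]
    _ = e z * w := by rw [map_mul, e.apply_symm_apply]⟩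
  invFun z := ⟨e.symm z, by
    rw [Subalgebra.mem_center_iff]
    intro w
    have := Subalgebra.mem_center_iff.mp z.2 (e w)
    calc w * e.symm z = e.symm (e w * z) := by rw [map_mul, e.symm_apply_apply]
    _ = e.symm (z * e w) := by rw [this]
    _ = e.symm z * w := by rw [map_mul, e.symm_apply_apply]⟩
  map_add' x y := by ext; simp
  map_smul' c x := by ext; simp
  left_inv x := by ext; simp
  right_inv x := by ext; simp

/-- packaged version: if an algebra is equivalent to a tensor product, its center is
1-dimensional iff the centers of both factors are. -/
theorem finrank_center_one_of_equiv {K : Type*} [Field K] {A B C : Type*}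
    [Ring A] [Algebra K A] [Ring B] [Algebra K B] [Ring C] [Algebra K C]
    (e : A ≃ₐ[K] (B ⊗[K] C)) :
    Module.finrank K (Subalgebra.center K A) = 1 ↔
      Module.finrank K (Subalgebra.center K B) = 1 ∧
      Module.finrank K (Subalgebra.center K C) = 1 := by
  rw [(centerLinearCongr e).finrank_eq, finrank_center_tensor_one_iff]

end CenterCongr


/-- The center of the Clifford graph algebra of a disjoint union is 1-dimensional iff the
centers of the Clifford graph algebras of both parts are 1-dimensional. -/
theorem center_one_dim_of_union_iff {V₁ V₂ : Type}
    [Fintype V₁] [Fintype V₂] (G₁ : SimpleGraph V₁) (G₂ : SimpleGraph V₂) :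
    Module.finrank ℂ
        (Subalgebra.center ℂ (GraphCliffordAlgebra (disjUnionGraph G₁ G₂))) = 1 ↔
      Module.finrank ℂ (Subalgebra.center ℂ (GraphCliffordAlgebra G₁)) = 1 ∧
      Module.finrank ℂ (Subalgebra.center ℂ (GraphCliffordAlgebra G₂)) = 1 := by
  exact finrank_center_one_of_equiv (unionEquivTensor G₁ G₂)
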